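/- Let (P^{kl}, Φ_{kl}) solve the first HMM cell problem on the cube I_δ(x_α): -∂/∂x_j ( c^{(ε)}_{ijnh} ∂P^{kl}_n/∂x_h + e^{(ε)}_{hij} ∂Φ_{kl}/∂x_h ) = 0 and ∂/∂x_i ( e^{(ε)}_{inh} ∂P^{kl}_n/∂x_h − ϵ^{(ε)}_{ih} ∂Φ_{kl}/∂x_h ) = 0 in I_δ(x_α), with boundary data P^{kl}_n = δ_{nk} x_l and Φ_{kl} = 0 on ∂I_δ(x_α); and let (Q^{l}, Ψ_{l}) solve the second HMM cell problem: the same interior system with boundary data Q^{l}_n = 0 and Ψ_l = x_l on ∂I_δ(x_α). Then the two definitions of the HMM effective piezoelectric coefficient coincide: ⟨ e^{(ε)}_{inh} ∂P^{kl}_n/∂x_h − ϵ^{(ε)}_{ih} ∂Φ_{kl}/∂x_h ⟩_{I_δ} = ⟨ c^{(ε)}_{klnh} ∂Q^{i}_n/∂x_h + e^{(ε)}_{hkl} ∂Ψ_i/∂x_h ⟩_{I_δ}, where ⟨·⟩_{I_δ} denotes the average (1/|I_δ|)∫_{I_δ} · dx. -/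

import Mathlib

/-!
Write `σ(U, φ)` for the stress and `D(U, φ)` for the electric displacement of a state. Testing the
Gauss law of `(P, Φ)` with `Ψ - x_i ∈ H¹₀` gives `∫ D(P, Φ)_i = ∫ D(P, Φ) · ∇Ψ`, and testing the
equilibrium of `(Q, Ψ)` with `P_n - δ_nk x_l ∈ H¹₀` gives `∫ σ(Q, Ψ) : ∇P = ∫ σ(Q, Ψ)_kl`. By the
major symmetry of `c` and the symmetry of `ϵ`, pointwise
`D(P, Φ) · ∇Ψ = σ(Q, Ψ) : ∇P - σ(P, Φ) : ∇Q + D(Q, Ψ) · ∇Φ`,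
and the last two terms integrate to zero because `Q_n, Φ ∈ H¹₀` are admissible test functions.
-/

open MeasureTheory Filter

noncomputable section

/-- Partial derivative of `f` in the `j`-th coordinate direction. -/
def pd (f : (Fin 3 → ℝ) → ℝ) (j : Fin 3) (x : Fin 3 → ℝ) : ℝ :=
  fderiv ℝ f x (Pi.single j 1)

/-- The cube `I_δ(c) = c + [-δ/2, δ/2]^3`. -/
def cube (c : Fin 3 → ℝ) (δ : ℝ) : Set (Fin 3 → ℝ) :=
  Set.univ.pi fun i => Set.Icc (c i - δ / 2) (c i + δ / 2)

/-- A model for membership in `H¹₀(s)`: differentiable, vanishing on the boundary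
of `s`, with the function and its gradient square integrable on `s`. -/
def H10 (s : Set (Fin 3 → ℝ)) (f : (Fin 3 → ℝ) → ℝ) : Prop :=
  Differentiable ℝ f ∧ (∀ x ∈ frontier s, f x = 0) ∧
    IntegrableOn (fun x => f x ^ 2) s ∧ ∀ j, IntegrableOn (fun x => pd f j x ^ 2) s

/-- Bounded measurable (i.e. `L^∞`) scalar function. -/
def BddMeas (f : (Fin 3 → ℝ) → ℝ) : Prop :=
  Measurable f ∧ ∃ M, ∀ x, |f x| ≤ M

section Reciprocity

variable {ι : Type*} [Fintype ι]

theorem sum_sum_mul_comm (E : ι → ι → ι → ℝ) (v : ι → ℝ) (w : ι → ι → ℝ) :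
    ∑ i, ∑ j, (∑ h, E h i j * v h) * w i j = ∑ h, (∑ i, ∑ j, E h i j * w i j) * v h := by
  simp only [Finset.sum_mul, ← Fintype.sum_prod_type']
  exact Fintype.sum_equiv ((Equiv.prodAssoc _ _ _).symm.trans (Equiv.prodComm _ _)) _ _
    fun _ => by simp; ring

theorem sum_sum_mul_comm_of_symm (C : ι → ι → ι → ι → ℝ)
    (hC : ∀ a b p q, C a b p q = C p q a b) (p q : ι → ι → ℝ) :
    ∑ i, ∑ j, (∑ n, ∑ h, C i j n h * q n h) * p i j
      = ∑ i, ∑ j, (∑ n, ∑ h, C i j n h * p n h) * q i j := by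
  simp only [Finset.sum_mul, ← Fintype.sum_prod_type']
  exact Fintype.sum_equiv ((Equiv.prodAssoc _ _ _).symm.trans
    ((Equiv.prodComm _ _).trans (Equiv.prodAssoc _ _ _))) _ _ fun _ => by simp [hC]; ring

theorem sum_mul_comm_of_symm (T : ι → ι → ℝ) (hT : ∀ a b, T a b = T b a) (v w : ι → ℝ) :
    ∑ i, (∑ h, T i h * v h) * w i = ∑ i, (∑ h, T i h * w h) * v i := by
  simp only [Finset.sum_mul]
  rw [Finset.sum_comm]
  exact Finset.sum_congr rfl fun _ _ => Finset.sum_congr rfl fun _ _ => by rw [hT]; ring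

/-- Betti–Maxwell reciprocity: `p, q` stand for the displacement gradients and `φ, ψ` for the
potential gradients of two piezoelectric states. -/
theorem piezo_reciprocity (C : ι → ι → ι → ι → ℝ) (E : ι → ι → ι → ℝ) (T : ι → ι → ℝ)
    (hC : ∀ a b p q, C a b p q = C p q a b) (hT : ∀ a b, T a b = T b a)
    (p q : ι → ι → ℝ) (φ ψ : ι → ℝ) :
    ∑ i, (∑ n, ∑ h, E i n h * p n h - ∑ h, T i h * φ h) * ψ i
      = ∑ i, ∑ j, (∑ n, ∑ h, C i j n h * q n h + ∑ h, E h i j * ψ h) * p i j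
        - ∑ i, ∑ j, (∑ n, ∑ h, C i j n h * p n h + ∑ h, E h i j * φ h) * q i j
        + ∑ i, (∑ n, ∑ h, E i n h * q n h - ∑ h, T i h * ψ h) * φ i := by
  simp only [add_mul, sub_mul, Finset.sum_add_distrib, Finset.sum_sub_distrib,
    sum_sum_mul_comm E, sum_sum_mul_comm_of_symm C hC p q, sum_mul_comm_of_symm T hT φ ψ]
  ring

end Reciprocity

theorem integrable_sum_mul {ι α : Type*} [Fintype ι] [MeasurableSpace α] {μ : Measure α}
    {F G : ι → α → ℝ} (hF : ∀ j, MemLp (F j) 2 μ) (hG : ∀ j, MemLp (G j) 2 μ) :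
    Integrable (fun x => ∑ j, F j x * G j x) μ :=
  integrable_finsetSum _ fun j _ => (hF j).integrable_mul (hG j)

theorem BddMeas.memLp_mul {μ : Measure (Fin 3 → ℝ)} {b f : (Fin 3 → ℝ) → ℝ} (hb : BddMeas b)
    (hf : MemLp f 2 μ) : MemLp (fun x => b x * f x) 2 μ := by
  obtain ⟨hmeas, M, hM⟩ := hb
  exact hf.mul (memLp_top_of_bound hmeas.aestronglyMeasurable M (ae_of_all _ hM))

theorem measurable_pd (f : (Fin 3 → ℝ) → ℝ) (j : Fin 3) : Measurable (pd f j) :=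
  measurable_fderiv_apply_const ℝ f _

theorem pd_sub_coord {f : (Fin 3 → ℝ) → ℝ} (hf : Differentiable ℝ f) (m j : Fin 3)
    (x : Fin 3 → ℝ) : pd (fun y => f y - y m) j x = pd f j x - if m = j then 1 else 0 := by
  rw [pd, pd, fderiv_fun_sub (hf x) (differentiable_apply m x), (hasFDerivAt_apply m x).fderiv]
  simp [Pi.single_apply]

instance isFiniteMeasure_restrict_cube (c : Fin 3 → ℝ) (δ : ℝ) :
    IsFiniteMeasure (volume.restrict (cube c δ)) :=
  isFiniteMeasure_restrict.2 (isCompact_univ_pi fun _ => isCompact_Icc).measure_lt_top.ne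

section H10

variable {s : Set (Fin 3 → ℝ)} {f : (Fin 3 → ℝ) → ℝ} {m : Fin 3}

theorem differentiable_of_H10_sub_coord (h : H10 s fun x => f x - x m) : Differentiable ℝ f := by
  simpa using h.1.fun_add (differentiable_apply m)

theorem memLp_pd_of_H10 (h : H10 s f) (j : Fin 3) : MemLp (pd f j) 2 (volume.restrict s) :=
  (memLp_two_iff_integrable_sq (measurable_pd f j).aestronglyMeasurable).2 (h.2.2.2 j)

variable [IsFiniteMeasure (volume.restrict s)]

theorem memLp_pd_of_H10_sub_coord (h : H10 s fun x => f x - x m) (j : Fin 3) :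
    MemLp (pd f j) 2 (volume.restrict s) := by
  convert (memLp_pd_of_H10 h j).add (memLp_const (if m = j then (1 : ℝ) else 0)) using 1
  funext x
  simp [pd_sub_coord (differentiable_of_H10_sub_coord h)]

theorem memLp_pd_of_H10_sub_ite {b : Prop} [Decidable b]
    (h : H10 s fun x => f x - if b then x m else 0) (j : Fin 3) :
    MemLp (pd f j) 2 (volume.restrict s) := by
  by_cases hb : b
  · exact memLp_pd_of_H10_sub_coord (by simpa [hb] using h) j
  · exact memLp_pd_of_H10 (by simpa [hb] using h) j

theorem integral_sum_mul_pd_of_H10_sub_coord {F : Fin 3 → (Fin 3 → ℝ) → ℝ}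
    (hF : ∀ j, MemLp (F j) 2 (volume.restrict s))
    (hweak : ∀ g, H10 s g → ∫ x in s, ∑ j, F j x * pd g j x = 0)
    (hf : H10 s fun x => f x - x m) :
    ∫ x in s, ∑ j, F j x * pd f j x = ∫ x in s, F m x := by
  have hsplit : ∀ x, ∑ j, F j x * pd f j x
      = ∑ j, F j x * pd (fun y => f y - y m) j x + F m x := fun x => by
    simp [pd_sub_coord (differentiable_of_H10_sub_coord hf), mul_sub]
  simp_rw [hsplit]
  rw [integral_add (integrable_sum_mul hF (memLp_pd_of_H10 hf)) ((hF m).integrable one_le_two),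
    hweak _ hf, zero_add]

theorem integral_sum_sum_mul_pd_of_H10_sub_ite {G : Fin 3 → Fin 3 → (Fin 3 → ℝ) → ℝ}
    {U : Fin 3 → (Fin 3 → ℝ) → ℝ} {k l : Fin 3}
    (hG : ∀ n j, MemLp (G n j) 2 (volume.restrict s))
    (hweak : ∀ n g, H10 s g → ∫ x in s, ∑ j, G n j x * pd g j x = 0)
    (hU : ∀ n, H10 s fun x => U n x - if n = k then x l else 0) :
    ∫ x in s, ∑ n, ∑ j, G n j x * pd (U n) j x = ∫ x in s, G k l x := by
  rw [integral_finsetSum _ fun n _ => integrable_sum_mul (hG n) (memLp_pd_of_H10_sub_ite (hU n)),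
    Finset.sum_eq_single k]
  · exact integral_sum_mul_pd_of_H10_sub_coord (hG k) (hweak k) (by simpa using hU k)
  · exact fun n _ hn => hweak n (U n) (by simpa [hn] using hU n)
  · simp

end H10

section Piezo

variable (c : Fin 3 → Fin 3 → Fin 3 → Fin 3 → (Fin 3 → ℝ) → ℝ)
  (e : Fin 3 → Fin 3 → Fin 3 → (Fin 3 → ℝ) → ℝ) (ϵ : Fin 3 → Fin 3 → (Fin 3 → ℝ) → ℝ)

def piezoStress (U : Fin 3 → (Fin 3 → ℝ) → ℝ) (φ : (Fin 3 → ℝ) → ℝ) (i j : Fin 3)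
    (x : Fin 3 → ℝ) : ℝ :=
  (∑ n, ∑ h, c i j n h x * pd (U n) h x) + ∑ h, e h i j x * pd φ h x

def electricDisplacement (U : Fin 3 → (Fin 3 → ℝ) → ℝ) (φ : (Fin 3 → ℝ) → ℝ) (i : Fin 3)
    (x : Fin 3 → ℝ) : ℝ :=
  (∑ n, ∑ h, e i n h x * pd (U n) h x) - ∑ h, ϵ i h x * pd φ h x

variable {c e ϵ} {μ : Measure (Fin 3 → ℝ)} {U V : Fin 3 → (Fin 3 → ℝ) → ℝ}
  {φ ψ : (Fin 3 → ℝ) → ℝ}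

theorem memLp_piezoStress (hc : ∀ i j n h, BddMeas (c i j n h)) (he : ∀ h i j, BddMeas (e h i j))
    (hU : ∀ n h, MemLp (pd (U n) h) 2 μ) (hφ : ∀ h, MemLp (pd φ h) 2 μ) (i j : Fin 3) :
    MemLp (piezoStress c e U φ i j) 2 μ :=
  (memLp_finsetSum _ fun n _ => memLp_finsetSum _ fun h _ => (hc i j n h).memLp_mul (hU n h)).add
    (memLp_finsetSum _ fun h _ => (he h i j).memLp_mul (hφ h))

theorem memLp_electricDisplacement (he : ∀ i n h, BddMeas (e i n h))
    (hϵ : ∀ i h, BddMeas (ϵ i h)) (hU : ∀ n h, MemLp (pd (U n) h) 2 μ)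
    (hφ : ∀ h, MemLp (pd φ h) 2 μ) (i : Fin 3) :
    MemLp (electricDisplacement e ϵ U φ i) 2 μ :=
  (memLp_finsetSum _ fun n _ => memLp_finsetSum _ fun h _ => (he i n h).memLp_mul (hU n h)).sub
    (memLp_finsetSum _ fun h _ => (hϵ i h).memLp_mul (hφ h))

theorem integral_piezo_reciprocity (hc : ∀ i j n h, BddMeas (c i j n h))
    (he : ∀ i j h, BddMeas (e i j h)) (hϵ : ∀ i h, BddMeas (ϵ i h))
    (hcsym : ∀ a b p q x, c a b p q x = c p q a b x) (hϵsym : ∀ a b x, ϵ a b x = ϵ b a x)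
    (hU : ∀ n h, MemLp (pd (U n) h) 2 μ) (hφ : ∀ h, MemLp (pd φ h) 2 μ)
    (hV : ∀ n h, MemLp (pd (V n) h) 2 μ) (hψ : ∀ h, MemLp (pd ψ h) 2 μ) :
    ∫ x, ∑ i, electricDisplacement e ϵ U φ i x * pd ψ i x ∂μ
      = ∫ x, ∑ i, ∑ j, piezoStress c e V ψ i j x * pd (U i) j x ∂μ
        - ∫ x, ∑ i, ∑ j, piezoStress c e U φ i j x * pd (V i) j x ∂μ
        + ∫ x, ∑ i, electricDisplacement e ϵ V ψ i x * pd φ i x ∂μ := by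
  have hVU : Integrable (fun x => ∑ i, ∑ j, piezoStress c e V ψ i j x * pd (U i) j x) μ :=
    integrable_finsetSum _ fun i _ => integrable_sum_mul (memLp_piezoStress hc he hV hψ i) (hU i)
  have hUV : Integrable (fun x => ∑ i, ∑ j, piezoStress c e U φ i j x * pd (V i) j x) μ :=
    integrable_finsetSum _ fun i _ => integrable_sum_mul (memLp_piezoStress hc he hU hφ i) (hV i)
  rw [← integral_sub hVU hUV, ← integral_add (hVU.sub' hUV)
    (integrable_sum_mul (memLp_electricDisplacement he hϵ hV hψ) hφ)]
  congr 1 with x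
  exact piezo_reciprocity (fun a b p q => c a b p q x) (fun a p q => e a p q x) (fun a b => ϵ a b x)
    (fun a b p q => hcsym a b p q x) (fun a b => hϵsym a b x) (fun n h => pd (U n) h x)
    (fun n h => pd (V n) h x) (fun h => pd φ h x) (fun h => pd ψ h x)

end Piezo

theorem hmm_effective_piezo_coefficient_consistency_general
    (c : Fin 3 → Fin 3 → Fin 3 → Fin 3 → (Fin 3 → ℝ) → ℝ)
    (e : Fin 3 → Fin 3 → Fin 3 → (Fin 3 → ℝ) → ℝ)
    (ϵ : Fin 3 → Fin 3 → (Fin 3 → ℝ) → ℝ)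
    (hc : ∀ i j k l, BddMeas (c i j k l)) (he : ∀ k i j, BddMeas (e k i j))
    (hϵ : ∀ i j, BddMeas (ϵ i j))
    (hcsym : ∀ i j k l x, c i j k l x = c j i k l x ∧ c i j k l x = c k l i j x)
    (hϵsym : ∀ i j x, ϵ i j x = ϵ j i x)
    (xα : Fin 3 → ℝ) (δ : ℝ)
    (i k l : Fin 3)
    -- the first cell problem `(P^{kl}, Φ_{kl})`
    (P : Fin 3 → (Fin 3 → ℝ) → ℝ) (Φ : (Fin 3 → ℝ) → ℝ)
    (hPbc : ∀ n, H10 (cube xα δ) (fun x => P n x - if n = k then x l else 0))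
    (hΦbc : H10 (cube xα δ) Φ)
    (hP1 : ∀ i', ∀ g, H10 (cube xα δ) g →
      ∫ x in cube xα δ, (∑ j, ((∑ n, ∑ h, c i' j n h x * pd (P n) h x)
        + ∑ h, e h i' j x * pd Φ h x) * pd g j x) = 0)
    (hP2 : ∀ g, H10 (cube xα δ) g →
      ∫ x in cube xα δ, (∑ i', ((∑ n, ∑ h, e i' n h x * pd (P n) h x)
        - ∑ h, ϵ i' h x * pd Φ h x) * pd g i' x) = 0)
    -- the second cell problem `(Q^{i}, Ψ_i)`
    (Q : Fin 3 → (Fin 3 → ℝ) → ℝ) (Ψ : (Fin 3 → ℝ) → ℝ)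
    (hQbc : ∀ n, H10 (cube xα δ) (Q n))
    (hΨbc : H10 (cube xα δ) (fun x => Ψ x - x i))
    (hQ1 : ∀ i', ∀ g, H10 (cube xα δ) g →
      ∫ x in cube xα δ, (∑ j, ((∑ n, ∑ h, c i' j n h x * pd (Q n) h x)
        + ∑ h, e h i' j x * pd Ψ h x) * pd g j x) = 0)
    (hQ2 : ∀ g, H10 (cube xα δ) g →
      ∫ x in cube xα δ, (∑ i', ((∑ n, ∑ h, e i' n h x * pd (Q n) h x)
        - ∑ h, ϵ i' h x * pd Ψ h x) * pd g i' x) = 0) :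
    (⨍ x in cube xα δ, ((∑ n, ∑ h, e i n h x * pd (P n) h x) - ∑ h, ϵ i h x * pd Φ h x))
      = ⨍ x in cube xα δ,
          ((∑ n, ∑ h, c k l n h x * pd (Q n) h x) + ∑ h, e h k l x * pd Ψ h x) := by
  have hP := fun n => memLp_pd_of_H10_sub_ite (hPbc n)
  have hΦ := memLp_pd_of_H10 hΦbc
  have hQ := fun n => memLp_pd_of_H10 (hQbc n)
  have hΨ := memLp_pd_of_H10_sub_coord hΨbc
  rw [setAverage_eq, setAverage_eq]
  congr 1
  calc ∫ x in cube xα δ, electricDisplacement e ϵ P Φ i x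
      = ∫ x in cube xα δ, ∑ i', electricDisplacement e ϵ P Φ i' x * pd Ψ i' x :=
        (integral_sum_mul_pd_of_H10_sub_coord (memLp_electricDisplacement he hϵ hP hΦ) hP2
          hΨbc).symm
    _ = _ :=
        integral_piezo_reciprocity hc he hϵ (fun a b p q x => (hcsym a b p q x).2) hϵsym
          hP hΦ hQ hΨ
    _ = ∫ x in cube xα δ, piezoStress c e Q Ψ k l x := by
      have hPQ : ∀ i', ∫ x in cube xα δ, ∑ j, piezoStress c e P Φ i' j x * pd (Q i') j x = 0 :=
        fun i' => hP1 i' (Q i') (hQbc i')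
      have hQΦ : ∫ x in cube xα δ, ∑ i', electricDisplacement e ϵ Q Ψ i' x * pd Φ i' x = 0 :=
        hQ2 Φ hΦbc
      rw [integral_sum_sum_mul_pd_of_H10_sub_ite (memLp_piezoStress hc he hQ hΨ) hQ1 hPbc,
        integral_finsetSum _ fun i' _ =>
          integrable_sum_mul (memLp_piezoStress hc he hP hΦ i') (hQ i'), hQΦ]
      simp only [hPQ, Finset.sum_const_zero, sub_zero, add_zero]

/-- the two definitions of the HMM effective piezoelectric
coefficient `e^H_{ikl}` (via the first cell problem `(P^{kl}, Φ_{kl})`, resp.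
the second cell problem `(Q^{i}, Ψ_i)`) coincide. -/
theorem hmm_effective_piezo_coefficient_consistency
    (c : Fin 3 → Fin 3 → Fin 3 → Fin 3 → (Fin 3 → ℝ) → ℝ)
    (e : Fin 3 → Fin 3 → Fin 3 → (Fin 3 → ℝ) → ℝ)
    (ϵ : Fin 3 → Fin 3 → (Fin 3 → ℝ) → ℝ)
    (hc : ∀ i j k l, BddMeas (c i j k l)) (he : ∀ k i j, BddMeas (e k i j))
    (hϵ : ∀ i j, BddMeas (ϵ i j))
    (hcsym : ∀ i j k l x, c i j k l x = c j i k l x ∧ c i j k l x = c k l i j x)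
    (hesym : ∀ k i j x, e k i j x = e k j i x)
    (hϵsym : ∀ i j x, ϵ i j x = ϵ j i x)
    (hcell : ∃ α > (0:ℝ), ∀ x (X : Fin 3 → Fin 3 → ℝ), (∀ i j, X i j = X j i) →
      α * (∑ i, ∑ j, X i j ^ 2) ≤ ∑ i, ∑ j, ∑ k, ∑ l, c i j k l x * X i j * X k l)
    (hϵell : ∃ β > (0:ℝ), ∀ x (v : Fin 3 → ℝ),
      β * (∑ i, v i ^ 2) ≤ ∑ i, ∑ j, ϵ i j x * v i * v j)
    (xα : Fin 3 → ℝ) (δ : ℝ) (hδ : 0 < δ)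
    (i k l : Fin 3)
    -- the first cell problem `(P^{kl}, Φ_{kl})`
    (P : Fin 3 → (Fin 3 → ℝ) → ℝ) (Φ : (Fin 3 → ℝ) → ℝ)
    (hPreg : ∀ n, Differentiable ℝ (P n))
    (hPbc : ∀ n, H10 (cube xα δ) (fun x => P n x - if n = k then x l else 0))
    (hΦbc : H10 (cube xα δ) Φ)
    (hP1 : ∀ i', ∀ g, H10 (cube xα δ) g →
      ∫ x in cube xα δ, (∑ j, ((∑ n, ∑ h, c i' j n h x * pd (P n) h x)
        + ∑ h, e h i' j x * pd Φ h x) * pd g j x) = 0)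
    (hP2 : ∀ g, H10 (cube xα δ) g →
      ∫ x in cube xα δ, (∑ i', ((∑ n, ∑ h, e i' n h x * pd (P n) h x)
        - ∑ h, ϵ i' h x * pd Φ h x) * pd g i' x) = 0)
    -- the second cell problem `(Q^{i}, Ψ_i)`
    (Q : Fin 3 → (Fin 3 → ℝ) → ℝ) (Ψ : (Fin 3 → ℝ) → ℝ)
    (hΨreg : Differentiable ℝ Ψ)
    (hQbc : ∀ n, H10 (cube xα δ) (Q n))
    (hΨbc : H10 (cube xα δ) (fun x => Ψ x - x i))
    (hQ1 : ∀ i', ∀ g, H10 (cube xα δ) g →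
      ∫ x in cube xα δ, (∑ j, ((∑ n, ∑ h, c i' j n h x * pd (Q n) h x)
        + ∑ h, e h i' j x * pd Ψ h x) * pd g j x) = 0)
    (hQ2 : ∀ g, H10 (cube xα δ) g →
      ∫ x in cube xα δ, (∑ i', ((∑ n, ∑ h, e i' n h x * pd (Q n) h x)
        - ∑ h, ϵ i' h x * pd Ψ h x) * pd g i' x) = 0) :
    (⨍ x in cube xα δ, ((∑ n, ∑ h, e i n h x * pd (P n) h x) - ∑ h, ϵ i h x * pd Φ h x))
      = ⨍ x in cube xα δ,
          ((∑ n, ∑ h, c k l n h x * pd (Q n) h x) + ∑ h, e h k l x * pd Ψ h x) :=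
  hmm_effective_piezo_coefficient_consistency_general c e ϵ hc he hϵ hcsym hϵsym xα δ i k l P Φ hPbc
    hΦbc hP1 hP2 Q Ψ hQbc hΨbc hQ1 hQ2
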